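/- Let p be a prime number and m ≥ 1 an integer. Then the polynomial f_{1,p^m}(X) is irreducible in ℤ[X]. -/

import Mathlib

open Polynomial

/-!
Multiplying by `X - 1` gives `(X - 1) f1 n = X + X² + ⋯ + Xⁿ - n`, so a root `z` of `f1 n` with
`‖z‖ ≤ 1` would satisfy `Σ Re zʲ = n` with every term `≤ 1`, forcing `z = 1`, which is not a root.
Hence every complex root has modulus `> 1`, and the constant term of any nonconstant monic factor,
being `±` the product of its roots, has absolute value `> 1`. If `f1 (p^m) = a b` with both factors
nonconstant, then `a(0) b(0) = p^m` makes `p` divide both constant terms, hence also the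
`X`-coefficient `a(0) b'(0) + a'(0) b(0) = p^m - 1`, which is absurd.
-/

/-- `f1 n = X^(n-1) + 2 X^(n-2) + ⋯ + (n-1) X + n = Σ_{k=1}^n k · X^(n-k)` over `ℤ`. -/
noncomputable def f1 (n : ℕ) : Polynomial ℤ :=
  ∑ k ∈ Finset.Icc 1 n, C (k : ℤ) * X ^ (n - k)

@[simp]
lemma f1_zero : f1 0 = 0 := by simp [f1]

lemma f1_succ (n : ℕ) : f1 (n + 1) = X * f1 n + C ((n : ℤ) + 1) := by
  rw [f1, f1, Finset.sum_Icc_succ_top (by omega), Finset.mul_sum]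
  congr 1
  · refine Finset.sum_congr rfl fun k hk => ?_
    rw [Finset.mem_Icc] at hk
    rw [show n + 1 - k = n - k + 1 by omega, pow_succ]
    ring
  · simp

@[simp]
lemma f1_one : f1 1 = 1 := by simp [f1_succ]

lemma f1_monic {n : ℕ} (hn : 1 ≤ n) : (f1 n).Monic := by
  induction n, hn using Nat.le_induction with
  | base => simp
  | succ n hn ih =>
    rw [f1_succ]
    refine (monic_X.mul ih).add_of_left (degree_lt_degree ?_)
    rw [natDegree_C, natDegree_X_mul ih.ne_zero]
    omega

lemma coeff_f1_zero (n : ℕ) : (f1 n).coeff 0 = n := by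
  induction n with
  | zero => simp
  | succ n ih => simp [f1_succ]

lemma coeff_f1_one {n : ℕ} (hn : 1 ≤ n) : (f1 n).coeff 1 = n - 1 := by
  obtain ⟨n, rfl⟩ := Nat.exists_eq_add_of_le' hn
  simp [f1_succ, coeff_X_mul, coeff_f1_zero, coeff_one]

lemma two_mul_eval_one_f1 (n : ℕ) : 2 * (f1 n).eval 1 = n * (n + 1) := by
  induction n with
  | zero => simp
  | succ n ih =>
    rw [f1_succ, eval_add, eval_mul, eval_X, eval_C, one_mul, mul_add, ih]
    push_cast
    ring

lemma X_sub_one_mul_f1 (n : ℕ) :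
    (X - 1) * f1 n = ∑ j ∈ Finset.range n, X ^ (j + 1) - C (n : ℤ) := by
  induction n with
  | zero => simp
  | succ n ih =>
    rw [f1_succ, Finset.sum_range_succ', mul_add, mul_left_comm, ih, mul_sub, Finset.mul_sum]
    simp only [← pow_succ']
    push_cast [C_add, C_1]
    ring

lemma Multiset.one_lt_prod_of_one_lt {M : Type*} [CommMonoid M] [Preorder M] [IsOrderedMonoid M]
    {s : Multiset M} (h : ∀ x ∈ s, 1 < x) (hs : s ≠ 0) : 1 < s.prod := by
  rw [← Multiset.prod_toList]
  exact s.toList.one_lt_prod_of_one_lt (by simpa using h) (by simpa using hs)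

lemma Complex.eq_one_of_norm_le_one_of_sum_pow_eq {z : ℂ} {n : ℕ} (hn : 0 < n) (hz : ‖z‖ ≤ 1)
    (h : ∑ j ∈ Finset.range n, z ^ (j + 1) = n) : z = 1 := by
  have hre_le : ∀ j ∈ Finset.range n, (z ^ (j + 1)).re ≤ 1 := fun j _ =>
    (re_le_norm _).trans (by rw [norm_pow]; exact pow_le_one₀ (norm_nonneg z) hz)
  have hre_sum : ∑ j ∈ Finset.range n, (z ^ (j + 1)).re = ∑ j ∈ Finset.range n, (1 : ℝ) := by
    simpa using congrArg re h
  have hre : z.re = 1 := by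
    simpa using (Finset.sum_eq_sum_iff_of_le hre_le).mp hre_sum 0 (Finset.mem_range.mpr hn)
  have him : z.im = 0 :=
    abs_re_eq_norm.mp (by rw [hre, abs_one]; exact le_antisymm (hre ▸ re_le_norm z) hz)
  exact ext (by simp [hre]) (by simp [him])

lemma one_lt_norm_of_aeval_f1_eq_zero {n : ℕ} (hn : 1 ≤ n) {z : ℂ} (hz : aeval z (f1 n) = 0) :
    1 < ‖z‖ := by
  by_contra! hle
  have hsum : ∑ j ∈ Finset.range n, z ^ (j + 1) = n := by
    simpa [hz, sub_eq_zero] using (congrArg (aeval z) (X_sub_one_mul_f1 n)).symm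
  have hz1 := Complex.eq_one_of_norm_le_one_of_sum_pow_eq hn hle hsum
  have heval : 2 * (f1 n).eval 1 ≠ 0 := by rw [two_mul_eval_one_f1]; positivity
  rw [hz1, aeval_def, eval₂_at_one, algebraMap_int_eq, eq_intCast, Int.cast_eq_zero] at hz
  simp [hz] at heval

lemma Polynomial.Monic.one_lt_natAbs_coeff_zero_of_one_lt_norm_aroots {a : ℤ[X]} (ha : a.Monic)
    (hdeg : 0 < a.natDegree) (hroots : ∀ z ∈ a.aroots ℂ, 1 < ‖z‖) :
    1 < (a.coeff 0).natAbs := by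
  have hsplit := IsAlgClosed.splits (a.map (algebraMap ℤ ℂ))
  have hcoeff : (a.coeff 0 : ℂ) = (-1) ^ a.natDegree * (a.aroots ℂ).prod := by
    rw [aroots, ← natDegree_map_eq_of_injective (algebraMap ℤ ℂ).injective_int,
      ← hsplit.coeff_zero_eq_prod_roots_of_monic (ha.map _), coeff_map, eq_intCast]
  have hprod : 1 < ((a.aroots ℂ).map (‖·‖₊)).prod := by
    refine Multiset.one_lt_prod_of_one_lt (Multiset.forall_mem_map_iff.mpr hroots) ?_
    rw [Ne, Multiset.map_eq_zero, ← Multiset.card_eq_zero, ← hsplit.natDegree_eq_card_roots,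
      natDegree_map_eq_of_injective (algebraMap ℤ ℂ).injective_int]
    exact hdeg.ne'
  have hnorm := congrArg (‖·‖₊) hcoeff
  simp only [nnnorm_mul, nnnorm_pow, nnnorm_neg, nnnorm_one, one_pow, one_mul] at hnorm
  rw [← nnnorm_natAbs, Complex.nnnorm_natCast,
    show ‖(a.aroots ℂ).prod‖₊ = _ from map_multiset_prod (nnnormHom : ℂ →*₀ NNReal) _] at hnorm
  exact_mod_cast hnorm ▸ hprod

lemma Int.natCast_dvd_of_mul_eq_prime_pow {p m : ℕ} (hp : p.Prime) {a b : ℤ}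
    (hab : a * b = (p : ℤ) ^ m) (ha : 1 < a.natAbs) : (p : ℤ) ∣ a := by
  have hdvd : a.natAbs ∣ p ^ m :=
    ⟨b.natAbs, by simpa [Int.natAbs_mul] using congrArg Int.natAbs hab.symm⟩
  obtain ⟨i, -, hi⟩ := (Nat.dvd_prime_pow hp).mp hdvd
  have hi0 : i ≠ 0 := by rintro rfl; simp [hi] at ha
  exact Int.natCast_dvd.mpr (hi ▸ dvd_pow_self p hi0)

lemma Polynomial.dvd_coeff_one_mul {R : Type*} [CommSemiring R] {c : R} {a b : R[X]}
    (ha : c ∣ a.coeff 0) (hb : c ∣ b.coeff 0) : c ∣ (a * b).coeff 1 := by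
  rw [coeff_mul, Finset.Nat.sum_antidiagonal_succ]
  simp only [Finset.Nat.antidiagonal_zero, Finset.sum_singleton]
  exact dvd_add (dvd_mul_of_dvd_left ha _) (dvd_mul_of_dvd_right hb _)

theorem Polynomial.Monic.irreducible_of_coeff_zero_eq_prime_pow {f : ℤ[X]} (hf : f.Monic)
    {p m : ℕ} (hp : p.Prime) (h0 : f.coeff 0 = (p : ℤ) ^ m) (h1 : ¬(p : ℤ) ∣ f.coeff 1)
    (hroots : ∀ z ∈ f.aroots ℂ, 1 < ‖z‖) : Irreducible f := by
  refine hf.irreducible_iff_natDegree.mpr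
    ⟨fun hf1 => h1 (by simp [hf1, coeff_one]), fun a b ha hb hab => ?_⟩
  by_contra! hdeg
  have hfactor {c d : ℤ[X]} (hc : c.Monic) (hcd : c * d = f) (hc0 : c.natDegree ≠ 0) :
      (p : ℤ) ∣ c.coeff 0 := by
    refine Int.natCast_dvd_of_mul_eq_prime_pow hp (m := m) (b := d.coeff 0) ?_ ?_
    · rw [← mul_coeff_zero, hcd, h0]
    refine hc.one_lt_natAbs_coeff_zero_of_one_lt_norm_aroots (Nat.pos_of_ne_zero hc0) ?_
    intro z hz
    refine hroots z (mem_aroots.mpr ⟨hf.ne_zero, ?_⟩)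
    rw [← hcd, map_mul, (mem_aroots.mp hz).2, zero_mul]
  exact h1 (hab ▸ dvd_coeff_one_mul (hfactor ha hab hdeg.1)
    (hfactor hb (by rw [mul_comm, hab]) hdeg.2))

/-- If `p` is prime and `m ≥ 1`, then `f1 (p^m)` is irreducible in `ℤ[X]`. -/
theorem stmt6 (p m : ℕ) (hp : p.Prime) (hm : 1 ≤ m) : Irreducible (f1 (p ^ m)) := by
  have hn : 1 ≤ p ^ m := Nat.one_le_pow _ _ hp.pos
  refine (f1_monic hn).irreducible_of_coeff_zero_eq_prime_pow hp (m := m)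
    (by simp [coeff_f1_zero]) ?_ fun z hz => one_lt_norm_of_aeval_f1_eq_zero hn (mem_aroots.mp hz).2
  rw [coeff_f1_one hn, Nat.cast_pow]
  intro hdvd
  have : (p : ℤ) ∣ 1 := (dvd_sub_right (dvd_pow_self _ (by omega))).mp hdvd
  exact hp.ne_one (Nat.dvd_one.mp (Int.natCast_dvd_natCast.mp this))
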